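/- arXiv:2109.04972 — 2 statements merged into one kernel-verified Lean document; each statement's English description precedes it below -/
import Mathlib

section
/- Let K ⊆ ℝⁿ be a bounded star-shaped domain with smooth boundary, let u : S^{n-1} → (−1, ∞) be the smooth function such that T(x) := (1+u(x))x ∈ ∂K for every x ∈ S^{n-1}, and set v := ∇u/(1+u). Then the second fundamental form of ∂K at the point T(x) is given by II_{T(x)} = (1/((1+u)√(1+|v|²))) · (id − ∇²u/(1+u) + v ⊗ v), where ∇²u is the Hessian of u on S^{n-1} extended by 0 on the span of x (i.e. ∇²u[x, X] = ∇²u[X, x] = 0 for every vector X), and the identity is understood as an equality of bilinear forms on the tangent space of ∂K at T(x). -/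
open MeasureTheory Metric Set Real
open scoped ENNReal RealInnerProductSpace

noncomputable section

abbrev Euc (n : ℕ) := EuclideanSpace ℝ (Fin n)

/-- Divergence of a vector field on Euclidean space: trace of its Fréchet derivative.
For a vector field which is tangent to the unit sphere and homogeneous along rays, this
coincides on the sphere with the divergence on the sphere. -/
def divg {n : ℕ} (W : Euc n → Euc n) (x : Euc n) : ℝ :=
  LinearMap.trace ℝ (Euc n) (fderiv ℝ W x).toLinearMap

/-- Laplacian (trace of the Hessian). For a `0`-homogeneous function this coincides on the
unit sphere with the Laplace–Beltrami operator of the sphere. -/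
def lapl {n : ℕ} (u : Euc n → ℝ) (x : Euc n) : ℝ := divg (gradient u) x

/-- The Hessian of `u` as a bilinear form: `hessBil u x X Y = D²u(x)[X, Y]`. For a
`0`-homogeneous `u` and `X, Y` tangent to the unit sphere at `x`, this coincides with the
covariant Hessian of `u` on the sphere. -/
def hessBil {n : ℕ} (u : Euc n → ℝ) (x X Y : Euc n) : ℝ :=
  ⟪fderiv ℝ (gradient u) x X, Y⟫

/-- A bounded star-shaped domain with smooth boundary in `ℝⁿ`, encoded by its radial
profile `u : S^{n-1} → (-1, ∞)` (so that `(1 + u(x))·x ∈ ∂K` for `x ∈ S^{n-1}`), extended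
to `ℝⁿ \ {0}` as a `0`-homogeneous function. -/
structure StarBody (n : ℕ) where
  u : Euc n → ℝ
  smooth : ContDiffOn ℝ (⊤ : ℕ∞) u {x : Euc n | x ≠ 0}
  homog : ∀ x : Euc n, x ≠ 0 → ∀ t : ℝ, 0 < t → u (t • x) = u x
  gtNegOne : ∀ x : Euc n, -1 < u x

namespace StarBody

variable {n : ℕ} (K : StarBody n)

/-- The map `T(x) = (1 + u(x))·x` sending the unit sphere onto `∂K`. -/
def T (x : Euc n) : Euc n := (1 + K.u x) • x

/-- The star-shaped domain `K = {r·x : x ∈ S^{n-1}, 0 ≤ r < 1 + u(x)}`. -/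
def body : Set (Euc n) := {0} ∪ {y : Euc n | y ≠ 0 ∧ ‖y‖ < 1 + K.u y}

/-- The boundary `∂K = T(S^{n-1})`. -/
def bdry : Set (Euc n) := {y : Euc n | y ≠ 0 ∧ ‖y‖ = 1 + K.u y}

/-- A defining function for `K`: `K = {Fdef < 0}`, `∂K = {Fdef = 0}` (away from `0`). -/
def Fdef (y : Euc n) : ℝ := ‖y‖ - (1 + K.u y)

/-- The outer unit normal to `∂K`, extended near `∂K` as the normalized gradient of the
defining function. -/
def normal (y : Euc n) : Euc n := ‖gradient K.Fdef y‖⁻¹ • gradient K.Fdef y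

/-- The mean curvature of `∂K` (trace of the second fundamental form with respect to the
outer unit normal), computed as the divergence of the unit normal field. -/
def meanCurv (y : Euc n) : ℝ := divg K.normal y

/-- The vector field `v = ∇u/(1 + u)` (the gradient being the gradient on the sphere). -/
def v (x : Euc n) : Euc n := (1 + K.u x)⁻¹ • gradient K.u x

end StarBody

/-- The Hessian of `u` on the sphere, extended by `0` on the span of the base point `x`:
`∇²u[X, Y] := D²u[X − ⟪X,x⟫x, Y − ⟪Y,x⟫x]` (for a `0`-homogeneous `u` this coincides with
the covariant Hessian of `u` on `S^{n-1}` on tangent vectors, and vanishes on `span x`). -/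
def hessSphere {n : ℕ} (u : Euc n → ℝ) (x X Y : Euc n) : ℝ :=
  hessBil u x (X - ⟪X, x⟫ • x) (Y - ⟪Y, x⟫ • x)


lemma inner_grad_apply {n : ℕ} (f : Euc n → ℝ) (z X : Euc n) :
    ⟪gradient f z, X⟫ = fderiv ℝ f z X := by
  simp [gradient, InnerProductSpace.toDual_symm_apply]

lemma hasFDerivAt_norm' {n : ℕ} {z : Euc n} (hz : z ≠ 0) :
    HasFDerivAt (fun y : Euc n => ‖y‖) (‖z‖⁻¹ • innerSL ℝ z) z := by
  have h1 : HasFDerivAt (fun y : Euc n => ‖y‖ ^ 2) (2 • innerSL ℝ z) z :=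
    (hasStrictFDerivAt_norm_sq z).hasFDerivAt
  have h2 : HasDerivAt Real.sqrt (1 / (2 * Real.sqrt (‖z‖ ^ 2))) (‖z‖ ^ 2) :=
    Real.hasDerivAt_sqrt (pow_ne_zero 2 (norm_ne_zero_iff.2 hz))
  have h3 := h2.comp_hasFDerivAt z h1
  have h4 : (fun y : Euc n => Real.sqrt (‖y‖ ^ 2)) = fun y : Euc n => ‖y‖ := by
    funext y; rw [Real.sqrt_sq (norm_nonneg _)]
  simp only [Function.comp_def] at h3
  rw [h4] at h3
  refine h3.congr_fderiv ?_
  rw [Real.sqrt_sq (norm_nonneg _)]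
  ext w
  simp only [ContinuousLinearMap.smul_apply, smul_eq_mul, ContinuousLinearMap.coe_smul',
    Pi.smul_apply]
  have : ‖z‖ ≠ 0 := norm_ne_zero_iff.2 hz
  field_simp
  ring

namespace StarBody
variable {n : ℕ} (K : StarBody n)

lemma contDiffAt_u {y : Euc n} (hy : y ≠ 0) : ContDiffAt ℝ (⊤ : ℕ∞) K.u y :=
  K.smooth.contDiffAt (IsOpen.mem_nhds isOpen_ne hy)

lemma diff_u {y : Euc n} (hy : y ≠ 0) : DifferentiableAt ℝ K.u y :=
  (K.contDiffAt_u hy).differentiableAt (by simp)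

lemma diff_fderiv_u {y : Euc n} (hy : y ≠ 0) :
    DifferentiableAt ℝ (fderiv ℝ K.u) y :=
  ((K.contDiffAt_u hy).fderiv_right (m := 1) (by exact WithTop.coe_le_coe.2 le_top)).differentiableAt one_ne_zero

lemma diff_g {y : Euc n} (hy : y ≠ 0) : DifferentiableAt ℝ (gradient K.u) y := by
  have h1 : DifferentiableAt ℝ (fderiv ℝ K.u) y := K.diff_fderiv_u hy
  have h2 : gradient K.u = fun z =>
      (InnerProductSpace.toDual ℝ (Euc n)).symm.toContinuousLinearEquiv (fderiv ℝ K.u z) := rfl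
  rw [h2]
  exact ((InnerProductSpace.toDual ℝ (Euc n)).symm.toContinuousLinearEquiv.differentiableAt).comp y h1

lemma fderiv_u_scale {y : Euc n} (hy : y ≠ 0) {t : ℝ} (ht : 0 < t) :
    fderiv ℝ K.u (t • y) = t⁻¹ • fderiv ℝ K.u y := by
  have hty : t • y ≠ 0 := smul_ne_zero ht.ne' hy
  have hmul : HasFDerivAt (fun z : Euc n => t • z)
      (t • ContinuousLinearMap.id ℝ (Euc n)) y := (hasFDerivAt_id y).const_smul t
  have hcomp : HasFDerivAt (fun z : Euc n => K.u (t • z))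
      ((fderiv ℝ K.u (t • y)).comp (t • ContinuousLinearMap.id ℝ (Euc n))) y :=
    (K.diff_u hty).hasFDerivAt.comp y hmul
  have heq : (fun z : Euc n => K.u (t • z)) =ᶠ[nhds y] K.u := by
    filter_upwards [IsOpen.mem_nhds isOpen_ne hy] with z hz
    exact K.homog z hz t ht
  have hE : fderiv ℝ K.u y = (fderiv ℝ K.u (t • y)).comp (t • ContinuousLinearMap.id ℝ (Euc n)) :=
    (hcomp.congr_of_eventuallyEq heq.symm).fderiv
  ext X
  have hE2 := congrArg (fun L : Euc n →L[ℝ] ℝ => L X) hE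
  simp only [ContinuousLinearMap.comp_apply, ContinuousLinearMap.smul_apply,
    ContinuousLinearMap.id_apply, _root_.map_smul, smul_eq_mul] at hE2 ⊢
  field_simp at hE2 ⊢
  linarith

lemma grad_u_scale {y : Euc n} (hy : y ≠ 0) {t : ℝ} (ht : 0 < t) :
    gradient K.u (t • y) = t⁻¹ • gradient K.u y := by
  simp only [gradient]
  rw [K.fderiv_u_scale hy ht, _root_.map_smul]

lemma fderiv_u_radial {y : Euc n} (hy : y ≠ 0) : fderiv ℝ K.u y y = 0 := by
  have h1 : HasDerivAt (fun t : ℝ => t • y) y 1 := by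
    simpa using (hasDerivAt_id (1 : ℝ)).smul_const y
  have h0 : (1 : ℝ) • y = y := one_smul _ _
  have hc : HasDerivAt (fun t : ℝ => K.u (t • y)) (fderiv ℝ K.u y y) 1 := by
    have hF : HasFDerivAt K.u (fderiv ℝ K.u y) ((1 : ℝ) • y) := by
      rw [one_smul]; exact (K.diff_u hy).hasFDerivAt
    have := hF.comp_hasDerivAt 1 h1
    exact this
  have heq : (fun t : ℝ => K.u (t • y)) =ᶠ[nhds (1 : ℝ)] fun _ => K.u y := by
    filter_upwards [eventually_gt_nhds one_pos] with t ht
    exact K.homog y hy t ht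
  have hc' : HasDerivAt (fun _ : ℝ => K.u y) (fderiv ℝ K.u y y) 1 :=
    hc.congr_of_eventuallyEq heq.symm
  exact hc'.unique (hasDerivAt_const 1 _)

lemma inner_grad_self {y : Euc n} (hy : y ≠ 0) : ⟪gradient K.u y, y⟫ = 0 := by
  rw [inner_grad_apply]; exact K.fderiv_u_radial hy

lemma fderiv_g_scale {y : Euc n} (hy : y ≠ 0) {t : ℝ} (ht : 0 < t) (X : Euc n) :
    fderiv ℝ (gradient K.u) (t • y) X = (t ^ 2)⁻¹ • fderiv ℝ (gradient K.u) y X := by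
  have hty : t • y ≠ 0 := smul_ne_zero ht.ne' hy
  have hmul : HasFDerivAt (fun z : Euc n => t • z)
      (t • ContinuousLinearMap.id ℝ (Euc n)) y := (hasFDerivAt_id y).const_smul t
  have hcomp : HasFDerivAt (fun z : Euc n => gradient K.u (t • z))
      ((fderiv ℝ (gradient K.u) (t • y)).comp (t • ContinuousLinearMap.id ℝ (Euc n))) y :=
    (K.diff_g hty).hasFDerivAt.comp y hmul
  have heq : (fun z : Euc n => gradient K.u (t • z)) =ᶠ[nhds y]
      (fun z => t⁻¹ • gradient K.u z) := by
    filter_upwards [IsOpen.mem_nhds isOpen_ne hy] with z hz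
    exact K.grad_u_scale hz ht
  have h2 : HasFDerivAt (fun z : Euc n => t⁻¹ • gradient K.u z)
      (t⁻¹ • fderiv ℝ (gradient K.u) y) y := ((K.diff_g hy).hasFDerivAt).const_smul t⁻¹
  have hE : (fderiv ℝ (gradient K.u) (t • y)).comp (t • ContinuousLinearMap.id ℝ (Euc n))
      = t⁻¹ • fderiv ℝ (gradient K.u) y :=
    (hcomp.congr_of_eventuallyEq heq.symm).unique h2
  have hE2 := congrArg (fun L : Euc n →L[ℝ] Euc n => L (t⁻¹ • X)) hE
  simp only [ContinuousLinearMap.comp_apply, ContinuousLinearMap.smul_apply,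
    ContinuousLinearMap.id_apply, _root_.map_smul, smul_smul,
    mul_inv_cancel₀ ht.ne'] at hE2
  rw [inv_mul_cancel₀ ht.ne', one_smul] at hE2
  rw [hE2]
  congr 1
  rw [sq, mul_inv]

lemma fderiv_g_radial {y : Euc n} (hy : y ≠ 0) :
    fderiv ℝ (gradient K.u) y y = - gradient K.u y := by
  have h1 : HasDerivAt (fun t : ℝ => t • y) y 1 := by
    simpa using (hasDerivAt_id (1 : ℝ)).smul_const y
  have hc : HasDerivAt (fun t : ℝ => gradient K.u (t • y)) (fderiv ℝ (gradient K.u) y y) 1 := by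
    have hF : HasFDerivAt (gradient K.u) (fderiv ℝ (gradient K.u) y) ((1 : ℝ) • y) := by
      rw [one_smul]; exact (K.diff_g hy).hasFDerivAt
    have := hF.comp_hasDerivAt 1 h1
    exact this
  have heq : (fun t : ℝ => gradient K.u (t • y)) =ᶠ[nhds (1 : ℝ)]
      (fun t : ℝ => t⁻¹ • gradient K.u y) := by
    filter_upwards [eventually_gt_nhds one_pos] with t ht
    exact K.grad_u_scale hy ht
  have hc' : HasDerivAt (fun t : ℝ => t⁻¹ • gradient K.u y) (fderiv ℝ (gradient K.u) y y) 1 :=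
    hc.congr_of_eventuallyEq heq.symm
  have hc2 : HasDerivAt (fun t : ℝ => t⁻¹ • gradient K.u y)
      ((-((1 : ℝ) ^ 2)⁻¹) • gradient K.u y) 1 :=
    (hasDerivAt_inv one_ne_zero).smul_const (gradient K.u y)
  have := hc'.unique hc2
  rw [this]
  norm_num

lemma hessBil_eq {y : Euc n} (hy : y ≠ 0) (X Y : Euc n) :
    ⟪fderiv ℝ (gradient K.u) y X, Y⟫ = fderiv ℝ (fderiv ℝ K.u) y X Y := by
  have h1 : HasFDerivAt (fun z : Euc n => ⟪Y, gradient K.u z⟫)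
      ((innerSL ℝ Y).comp (fderiv ℝ (gradient K.u) y)) y :=
    (innerSL ℝ Y).hasFDerivAt.comp y (K.diff_g hy).hasFDerivAt
  have h2 : HasFDerivAt (fun z : Euc n => ⟪Y, gradient K.u z⟫)
      ((ContinuousLinearMap.apply ℝ ℝ Y).comp (fderiv ℝ (fderiv ℝ K.u) y)) y := by
    have h3 : (fun z : Euc n => ⟪Y, gradient K.u z⟫) = fun z => fderiv ℝ K.u z Y := by
      funext z; rw [real_inner_comm, inner_grad_apply]
    rw [h3]
    exact (ContinuousLinearMap.apply ℝ ℝ Y).hasFDerivAt.comp y (K.diff_fderiv_u hy).hasFDerivAt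
  have hU := h1.unique h2
  have h4 := congrArg (fun L : Euc n →L[ℝ] ℝ => L X) hU
  simp only [ContinuousLinearMap.comp_apply, innerSL_apply_apply, ContinuousLinearMap.apply_apply] at h4
  rw [real_inner_comm]
  exact h4

lemma hess_symm {y : Euc n} (hy : y ≠ 0) (X Y : Euc n) :
    ⟪fderiv ℝ (gradient K.u) y X, Y⟫ = ⟪fderiv ℝ (gradient K.u) y Y, X⟫ := by
  rw [K.hessBil_eq hy, K.hessBil_eq hy]
  refine second_derivative_symmetric_of_eventually (f := K.u) ?_ (K.diff_fderiv_u hy).hasFDerivAt X Y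
  filter_upwards [IsOpen.mem_nhds isOpen_ne hy] with z hz
  exact (K.diff_u hz).hasFDerivAt

lemma grad_Fdef_eq {z : Euc n} (hz : z ≠ 0) :
    gradient K.Fdef z = ‖z‖⁻¹ • z - gradient K.u z := by
  have h1 : HasFDerivAt K.Fdef (‖z‖⁻¹ • innerSL ℝ z - fderiv ℝ K.u z) z := by
    have := (hasFDerivAt_norm' hz).sub (((K.diff_u hz).hasFDerivAt).const_add 1)
    exact this
  have h2 : HasGradientAt K.Fdef (‖z‖⁻¹ • z - gradient K.u z) z := by
    rw [hasGradientAt_iff_hasFDerivAt]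
    refine h1.congr_fderiv ?_
    ext w
    simp [map_sub, _root_.map_smul, InnerProductSpace.toDual_apply_apply,
      ContinuousLinearMap.sub_apply, ContinuousLinearMap.smul_apply, innerSL_apply_apply,
      gradient, LinearIsometryEquiv.apply_symm_apply, real_inner_smul_left]
  exact h2.gradient

end StarBody

set_option maxHeartbeats 2000000 in
/-- For a bounded star-shaped domain `K ⊆ ℝⁿ` with smooth boundary,
radial profile `u` and `v = ∇u/(1+u)`, the second fundamental form of `∂K` at `T(x)`,
`x ∈ S^{n-1}`, satisfies, as bilinear forms on the tangent space of `∂K` at `T(x)`,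
`II_{T(x)} = (1/((1+u)√(1+|v|²))) · (id − ∇²u/(1+u) + v ⊗ v)`,
where `∇²u` is the Hessian of `u` on the sphere extended by `0` on the span of `x`.
(The second fundamental form is evaluated as `II(X, Y) = ⟪Dν(T(x))[X], Y⟫`, `ν` being the
outer unit normal of `∂K`.) -/
theorem second_fundamental_form_formula (n : ℕ) (hn : 2 ≤ n) (K : StarBody n)
    (x : Euc n) (hx : x ∈ sphere (0 : Euc n) 1)
    (X Y : Euc n) (hX : ⟪X, K.normal (K.T x)⟫ = 0) (hY : ⟪Y, K.normal (K.T x)⟫ = 0) :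
    ⟪fderiv ℝ K.normal (K.T x) X, Y⟫
      = ((1 + K.u x) * Real.sqrt (1 + ‖K.v x‖ ^ 2))⁻¹
          * (⟪X, Y⟫ - hessSphere K.u x X Y / (1 + K.u x) + ⟪K.v x, X⟫ * ⟪K.v x, Y⟫) := by
  

  have hx1 : ‖x‖ = 1 := by simpa using hx
  have hx0 : x ≠ 0 := by
    intro h; rw [h, norm_zero] at hx1; exact one_ne_zero hx1.symm
  set s : ℝ := 1 + K.u x with hs_def
  have hs : 0 < s := by have := K.gtNegOne x; rw [hs_def]; linarith
  set p : Euc n := s • x with hp_def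
  have hTx : K.T x = p := rfl
  have hp0 : p ≠ 0 := by rw [hp_def]; exact smul_ne_zero hs.ne' hx0
  have hps : ‖p‖ = s := by
    rw [hp_def, norm_smul, hx1, Real.norm_eq_abs, abs_of_pos hs, mul_one]
  have hgp : gradient K.u p = K.v x := by
    rw [hp_def, K.grad_u_scale hx0 hs]; rfl
  set GF : Euc n → Euc n := fun z => ‖z‖⁻¹ • z - gradient K.u z with hGF_def
  have hGFp : GF p = x - K.v x := by
    simp only [hGF_def]
    rw [hgp, hps, hp_def, smul_smul, inv_mul_cancel₀ hs.ne', one_smul]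
  have hvdef : K.v x = s⁻¹ • gradient K.u x := rfl
  have hvx : ⟪x, K.v x⟫ = 0 := by
    rw [hvdef, real_inner_smul_right, real_inner_comm, K.inner_grad_self hx0, mul_zero]
  have hnormGFp : ‖GF p‖ = Real.sqrt (1 + ‖K.v x‖ ^ 2) := by
    have h1 : ‖GF p‖ ^ 2 = 1 + ‖K.v x‖ ^ 2 := by
      rw [hGFp, norm_sub_sq_real, hvx, hx1]; ring
    rw [← Real.sqrt_sq (norm_nonneg (GF p)), h1]
  have hNpos : (0 : ℝ) < Real.sqrt (1 + ‖K.v x‖ ^ 2) := Real.sqrt_pos.2 (by positivity)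
  have hGFnormpos : 0 < ‖GF p‖ := by rw [hnormGFp]; exact hNpos
  have hGFp0 : GF p ≠ 0 := by
    intro h; rw [h, norm_zero] at hGFnormpos; exact lt_irrefl 0 hGFnormpos
  have hnb : ∀ z : Euc n, z ≠ 0 → K.normal z = ‖GF z‖⁻¹ • GF z := by
    intro z hz
    simp only [StarBody.normal, hGF_def]
    rw [K.grad_Fdef_eq hz]
  have hev : K.normal =ᶠ[nhds p] fun z => ‖GF z‖⁻¹ • GF z := by
    filter_upwards [IsOpen.mem_nhds isOpen_ne hp0] with z hz
    exact hnb z hz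
  rw [hTx] at hX hY ⊢
  have hXgf : ⟪X, GF p⟫ = 0 := by
    rw [hnb p hp0, real_inner_smul_right] at hX
    exact (mul_eq_zero.1 hX).resolve_left (inv_ne_zero hGFnormpos.ne')
  have hYgf : ⟪Y, GF p⟫ = 0 := by
    rw [hnb p hp0, real_inner_smul_right] at hY
    exact (mul_eq_zero.1 hY).resolve_left (inv_ne_zero hGFnormpos.ne')
  have hxX : ⟪x, X⟫ = ⟪K.v x, X⟫ := by
    rw [hGFp, inner_sub_right] at hXgf
    have c1 : ⟪x, X⟫ = ⟪X, x⟫ := real_inner_comm _ _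
    have c2 : ⟪K.v x, X⟫ = ⟪X, K.v x⟫ := real_inner_comm _ _
    linarith
  have hxY : ⟪x, Y⟫ = ⟪K.v x, Y⟫ := by
    have h := hYgf
    rw [hGFp, inner_sub_right] at h
    have c1 : ⟪x, Y⟫ = ⟪Y, x⟫ := real_inner_comm _ _
    have c2 : ⟪K.v x, Y⟫ = ⟪Y, K.v x⟫ := real_inner_comm _ _
    linarith
  have hgX : ⟪gradient K.u x, X⟫ = s * ⟪K.v x, X⟫ := by
    rw [hvdef, real_inner_smul_left]
    field_simp
  have hgY : ⟪gradient K.u x, Y⟫ = s * ⟪K.v x, Y⟫ := by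
    rw [hvdef, real_inner_smul_left]
    field_simp
  -- derivative of GF at p
  have hWn : HasFDerivAt (fun z : Euc n => ‖z‖) (‖p‖⁻¹ • innerSL ℝ p) p := hasFDerivAt_norm' hp0
  have hinv : HasDerivAt (fun r : ℝ => r⁻¹) (-(‖p‖ ^ 2)⁻¹) ‖p‖ :=
    hasDerivAt_inv (by rw [hps]; exact hs.ne')
  have hninv : HasFDerivAt (fun z : Euc n => ‖z‖⁻¹)
      ((-(‖p‖ ^ 2)⁻¹) • (‖p‖⁻¹ • innerSL ℝ p)) p := by
    have := hinv.comp_hasFDerivAt p hWn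
    simpa [Function.comp_def] using this
  have hD1 : HasFDerivAt (fun z : Euc n => ‖z‖⁻¹ • z)
      (‖p‖⁻¹ • ContinuousLinearMap.id ℝ (Euc n)
        + ((-(‖p‖ ^ 2)⁻¹) • (‖p‖⁻¹ • innerSL ℝ p)).smulRight p) p :=
    hninv.smul (hasFDerivAt_id p)
  set DGF : Euc n →L[ℝ] Euc n := (‖p‖⁻¹ • ContinuousLinearMap.id ℝ (Euc n)
        + ((-(‖p‖ ^ 2)⁻¹) • (‖p‖⁻¹ • innerSL ℝ p)).smulRight p)
      - fderiv ℝ (gradient K.u) p with hDGF_def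
  have hDGF : HasFDerivAt GF DGF p := by
    rw [hDGF_def]
    exact hD1.sub (K.diff_g hp0).hasFDerivAt
  have hnormGF : HasFDerivAt (fun z : Euc n => ‖GF z‖)
      ((‖GF p‖⁻¹ • innerSL ℝ (GF p)).comp DGF) p :=
    (hasFDerivAt_norm' hGFp0).comp p hDGF
  set cf : Euc n →L[ℝ] ℝ :=
    (-(‖GF p‖ ^ 2)⁻¹) • ((‖GF p‖⁻¹ • innerSL ℝ (GF p)).comp DGF) with hcf_def
  have hfinv : HasFDerivAt (fun z : Euc n => ‖GF z‖⁻¹) cf p := by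
    have := (hasDerivAt_inv hGFnormpos.ne').comp_hasFDerivAt p hnormGF
    simpa [Function.comp_def, hcf_def] using this
  have hnormalD : HasFDerivAt K.normal (‖GF p‖⁻¹ • DGF + cf.smulRight (GF p)) p :=
    (hfinv.smul hDGF).congr_of_eventuallyEq hev
  clear_value s p GF DGF cf
  rw [hnormalD.fderiv]
  have hL1 : (‖GF p‖⁻¹ • DGF + cf.smulRight (GF p)) X
      = ‖GF p‖⁻¹ • DGF X + cf X • GF p := by
    simp [ContinuousLinearMap.add_apply, ContinuousLinearMap.smul_apply,
      ContinuousLinearMap.smulRight_apply]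
  have hYgf' : ⟪GF p, Y⟫ = 0 := by rw [real_inner_comm]; exact hYgf
  rw [hL1, inner_add_left, real_inner_smul_left, real_inner_smul_left,
    hYgf', mul_zero, add_zero]
  -- Hessian at p
  have hHp : ⟪fderiv ℝ (gradient K.u) p X, Y⟫
      = (s ^ 2)⁻¹ * ⟪fderiv ℝ (gradient K.u) x X, Y⟫ := by
    have h2 := K.fderiv_g_scale hx0 hs X
    rw [← hp_def] at h2
    rw [h2, real_inner_smul_left]
  have hDGFXY : ⟪DGF X, Y⟫
      = s⁻¹ * ⟪X, Y⟫ - s⁻¹ * (⟪x, X⟫ * ⟪x, Y⟫)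
        - (s ^ 2)⁻¹ * ⟪fderiv ℝ (gradient K.u) x X, Y⟫ := by
    have h1 : DGF X = ‖p‖⁻¹ • X + (-(‖p‖ ^ 2)⁻¹ * (‖p‖⁻¹ * ⟪p, X⟫)) • p
        - fderiv ℝ (gradient K.u) p X := by
      simp only [hDGF_def, ContinuousLinearMap.sub_apply, ContinuousLinearMap.add_apply,
        ContinuousLinearMap.smul_apply, ContinuousLinearMap.coe_smul', Pi.smul_apply,
        ContinuousLinearMap.id_apply, ContinuousLinearMap.smulRight_apply, innerSL_apply_apply,
        smul_eq_mul, smul_smul]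
      rw [mul_assoc]
    have hpX : ⟪p, X⟫ = s * ⟪x, X⟫ := by rw [hp_def, real_inner_smul_left]
    have hpY : ⟪p, Y⟫ = s * ⟪x, Y⟫ := by rw [hp_def, real_inner_smul_left]
    rw [h1, inner_sub_left, inner_add_left, real_inner_smul_left, real_inner_smul_left,
      hHp, hpX, hpY, hps]
    generalize ⟪X, Y⟫ = a
    generalize ⟪x, X⟫ = b
    generalize ⟪x, Y⟫ = c
    generalize ⟪fderiv ℝ (gradient K.u) x X, Y⟫ = H
    field_simp [hs.ne']
    ring
  -- Hessian sphere expansion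
  have hA : ⟪fderiv ℝ (gradient K.u) x X, x⟫ = -⟪gradient K.u x, X⟫ := by
    rw [K.hess_symm hx0 X x, K.fderiv_g_radial hx0, inner_neg_left]
  have hB2 : ⟪fderiv ℝ (gradient K.u) x x, Y⟫ = -⟪gradient K.u x, Y⟫ := by
    rw [K.fderiv_g_radial hx0, inner_neg_left]
  have hC : ⟪fderiv ℝ (gradient K.u) x x, x⟫ = 0 := by
    rw [K.fderiv_g_radial hx0, inner_neg_left, K.inner_grad_self hx0, neg_zero]
  have hSexp : hessSphere K.u x X Y
      = ⟪fderiv ℝ (gradient K.u) x X, Y⟫ + ⟪Y, x⟫ * ⟪gradient K.u x, X⟫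
        + ⟪X, x⟫ * ⟪gradient K.u x, Y⟫ := by
    simp only [hessSphere, hessBil, map_sub, _root_.map_smul, inner_sub_left, inner_sub_right,
      real_inner_smul_left, real_inner_smul_right]
    rw [hA, hB2, hC]
    ring
  rw [hnormGFp, hDGFXY, hSexp, hgX, hgY]
  have hXx2 : ⟪X, x⟫ = ⟪K.v x, X⟫ := by rw [real_inner_comm]; exact hxX
  have hYx2 : ⟪Y, x⟫ = ⟪K.v x, Y⟫ := by rw [real_inner_comm]; exact hxY
  rw [hXx2, hYx2, hxX, hxY]
  have hN0 : Real.sqrt (1 + ‖K.v x‖ ^ 2) ≠ 0 := hNpos.ne'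
  generalize ⟪X, Y⟫ = a
  generalize ⟪K.v x, X⟫ = b
  generalize ⟪K.v x, Y⟫ = c
  generalize ⟪fderiv ℝ (gradient K.u) x X, Y⟫ = H
  generalize Real.sqrt (1 + ‖K.v x‖ ^ 2) = N at hN0
  field_simp
  ring
end
end

section
/- Let K ⊆ ℝⁿ be a bounded star-shaped domain with smooth boundary, let u : S^{n-1} → (−1, ∞) be the smooth function such that T(x) := (1+u(x))x ∈ ∂K for every x ∈ S^{n-1}, and set v := ∇u/(1+u). Then the mean curvature of ∂K at T(x) can be written in divergence form as H_{T(x)} = (n−1+|v|²)/((1+u)√(1+|v|²)) − (1+u)^{−2} div( ∇u/√(1+|v|²) ), where div and ∇ are the divergence and gradient on S^{n-1}. -/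
open MeasureTheory Metric Set Real
open scoped ENNReal RealInnerProductSpace

noncomputable section

/-! ### Auxiliary trace and derivative lemmas -/

lemma trace_clm_id (n : ℕ) :
    LinearMap.trace ℝ (Euc n) (ContinuousLinearMap.id ℝ (Euc n)).toLinearMap = n := by
  rw [ContinuousLinearMap.coe_id, LinearMap.trace_id]
  simp [finrank_euclideanSpace_fin]

lemma trace_smulRight' {n : ℕ} (ℓ : Euc n →L[ℝ] ℝ) (w : Euc n) :
    LinearMap.trace ℝ (Euc n) (ℓ.smulRight w).toLinearMap = ℓ w := by
  have h1 : ((ℓ.smulRight w).toLinearMap : Euc n →ₗ[ℝ] Euc n)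
      = (LinearMap.toSpanSingleton ℝ (Euc n) w).comp (ℓ.toLinearMap) := by
    ext h
    simp [LinearMap.toSpanSingleton_apply]
  rw [h1, LinearMap.trace_comp_comm']
  have h2 : ((ℓ.toLinearMap).comp (LinearMap.toSpanSingleton ℝ (Euc n) w))
      = (ℓ w) • LinearMap.id := by
    ext c
    simp [LinearMap.toSpanSingleton_apply, smul_eq_mul, mul_comm]
  rw [h2, _root_.map_smul, LinearMap.trace_id]
  simp

lemma hasFDerivAt_norm_ne {n : ℕ} {z : Euc n} (hz : z ≠ 0) :
    HasFDerivAt (fun w : Euc n => ‖w‖) (‖z‖⁻¹ • (innerSL ℝ z)) z := by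
  have hz2 : ⟪z, z⟫ ≠ 0 := by
    rw [real_inner_self_eq_norm_sq]
    exact pow_ne_zero _ (norm_ne_zero_iff.mpr hz)
  have h0 : HasFDerivAt (fun w : Euc n => ⟪w, w⟫)
      ((fderivInnerCLM ℝ (z, z)).comp ((ContinuousLinearMap.id ℝ (Euc n)).prod
        (ContinuousLinearMap.id ℝ (Euc n)))) z := by
    simpa using (hasFDerivAt_id z).inner ℝ (hasFDerivAt_id z)
  have h1 := h0.sqrt hz2
  have h2 : (fun w : Euc n => Real.sqrt ⟪w, w⟫) = fun w : Euc n => ‖w‖ := by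
    funext w; rw [norm_eq_sqrt_real_inner]
  rw [h2] at h1
  refine h1.congr_fderiv ?_
  ext h
  have h3 : Real.sqrt ⟪z, z⟫ = ‖z‖ := (norm_eq_sqrt_real_inner z).symm
  simp only [ContinuousLinearMap.smul_apply, ContinuousLinearMap.coe_comp', Function.comp_apply,
    ContinuousLinearMap.prod_apply, ContinuousLinearMap.coe_id', id_eq, fderivInnerCLM_apply,
    smul_eq_mul, h3, innerSL_apply_apply]
  rw [real_inner_comm h z]
  have hn : ‖z‖ ≠ 0 := norm_ne_zero_iff.mpr hz
  field_simp
  ring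

/-- Riesz map Dual → Euc n as a genuine `ℝ`-continuous-linear map. -/
def dualToEuc (n : ℕ) : StrongDual ℝ (Euc n) →L[ℝ] Euc n where
  toFun := (InnerProductSpace.toDual ℝ (Euc n)).symm
  map_add' := fun a b => map_add _ a b
  map_smul' := fun c ℓ => by simp
  cont := (InnerProductSpace.toDual ℝ (Euc n)).symm.continuous

@[simp] lemma dualToEuc_apply {n : ℕ} (ℓ : StrongDual ℝ (Euc n)) :
    dualToEuc n ℓ = (InnerProductSpace.toDual ℝ (Euc n)).symm ℓ := rfl

lemma gradient_eq_dual {n : ℕ} (f : Euc n → ℝ) (z : Euc n) :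
    gradient f z = dualToEuc n (fderiv ℝ f z) := rfl

lemma dualToEuc_innerSL {n : ℕ} (z : Euc n) : dualToEuc n (innerSL ℝ z) = z := by
  rw [dualToEuc_apply]
  apply (InnerProductSpace.toDual ℝ (Euc n)).injective
  rw [LinearIsometryEquiv.apply_symm_apply]
  ext w
  simp [InnerProductSpace.toDual_apply_apply]

namespace StarBody
variable {n : ℕ} (K : StarBody n)

lemma contDiffAt' (z : Euc n) (hz : z ≠ 0) : ContDiffAt ℝ (⊤ : ℕ∞) K.u z :=
  K.smooth.contDiffAt (IsOpen.mem_nhds isOpen_ne hz)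

lemma diffAt (z : Euc n) (hz : z ≠ 0) : DifferentiableAt ℝ K.u z :=
  (K.contDiffAt' z hz).differentiableAt (by simp)

lemma diffGradAt (z : Euc n) (hz : z ≠ 0) :
    DifferentiableAt ℝ (fderiv ℝ K.u) z :=
  ((K.contDiffAt' z hz).fderiv_right (m := 1) (by exact WithTop.coe_le_coe.mpr le_top)).differentiableAt one_ne_zero

lemma hasFDerivAt_grad (z : Euc n) (hz : z ≠ 0) :
    HasFDerivAt (gradient K.u)
      ((dualToEuc n).comp (fderiv ℝ (fderiv ℝ K.u) z)) z := by
  have h1 : HasFDerivAt (dualToEuc n) (dualToEuc n) (fderiv ℝ K.u z) :=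
    (dualToEuc n).hasFDerivAt
  exact h1.comp z (K.diffGradAt z hz).hasFDerivAt

lemma diffGradientAt (z : Euc n) (hz : z ≠ 0) :
    DifferentiableAt ℝ (gradient K.u) z := (K.hasFDerivAt_grad z hz).differentiableAt

lemma grad_pair (z : Euc n) (h k : Euc n) (hz : z ≠ 0) :
    ⟪fderiv ℝ (gradient K.u) z h, k⟫ = fderiv ℝ (fderiv ℝ K.u) z h k := by
  rw [(K.hasFDerivAt_grad z hz).fderiv]
  simp [InnerProductSpace.toDual_symm_apply]

lemma hess_symm_s8 (z : Euc n) (hz : z ≠ 0) (h k : Euc n) :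
    ⟪fderiv ℝ (gradient K.u) z h, k⟫ = ⟪fderiv ℝ (gradient K.u) z k, h⟫ := by
  rw [K.grad_pair z h k hz, K.grad_pair z k h hz]
  exact (K.contDiffAt' z hz).isSymmSndFDerivAt (by rw [minSmoothness_of_isRCLikeNormedField]; exact WithTop.coe_le_coe.mpr le_top) h k

lemma inner_grad (z h : Euc n) : ⟪gradient K.u z, h⟫ = fderiv ℝ K.u z h := by
  simp [gradient, InnerProductSpace.toDual_symm_apply]

lemma fderiv_homog (z : Euc n) (hz : z ≠ 0) (t : ℝ) (ht : 0 < t) :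
    fderiv ℝ K.u (t • z) = t⁻¹ • fderiv ℝ K.u z := by
  have htz : t • z ≠ 0 := smul_ne_zero (ne_of_gt ht) hz
  have hsc : HasFDerivAt (fun w : Euc n => t • w)
      (t • ContinuousLinearMap.id ℝ (Euc n)) z := by
    exact (hasFDerivAt_id z).const_smul t
  have hcomp : HasFDerivAt (fun w : Euc n => K.u (t • w))
      ((fderiv ℝ K.u (t • z)).comp (t • ContinuousLinearMap.id ℝ (Euc n))) z :=
    HasFDerivAt.comp z (K.diffAt _ htz).hasFDerivAt hsc
  have heq : (fun w : Euc n => K.u (t • w)) =ᶠ[nhds z] K.u := by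
    filter_upwards [eventually_ne_nhds hz] with w hw
    exact K.homog w hw t ht
  have h2 : (fderiv ℝ K.u (t • z)).comp (t • ContinuousLinearMap.id ℝ (Euc n))
      = fderiv ℝ K.u z := by
    rw [← hcomp.fderiv]; exact heq.fderiv_eq
  ext h
  have h3 := congrArg (fun L : Euc n →L[ℝ] ℝ => L (t⁻¹ • h)) h2
  simp only [ContinuousLinearMap.coe_comp', Function.comp_apply,
    ContinuousLinearMap.smul_apply, ContinuousLinearMap.coe_id', id_eq,
    smul_inv_smul₀ (ne_of_gt ht)] at h3
  simpa using h3

lemma grad_homog (z : Euc n) (hz : z ≠ 0) (t : ℝ) (ht : 0 < t) :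
    gradient K.u (t • z) = t⁻¹ • gradient K.u z := by
  unfold gradient
  rw [K.fderiv_homog z hz t ht]
  simp

lemma grad_orth (z : Euc n) (hz : z ≠ 0) : ⟪gradient K.u z, z⟫ = 0 := by
  have hγ : HasDerivAt (fun s : ℝ => s • z) z 1 := by
    simpa using (hasDerivAt_id (1 : ℝ)).smul_const z
  have hu : HasFDerivAt K.u (fderiv ℝ K.u z) ((1 : ℝ) • z) := by
    rw [one_smul]; exact (K.diffAt z hz).hasFDerivAt
  have hc : HasDerivAt (fun s : ℝ => K.u (s • z)) (fderiv ℝ K.u z z) 1 :=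
    hu.comp_hasDerivAt 1 hγ
  have heq : (fun s : ℝ => K.u (s • z)) =ᶠ[nhds (1 : ℝ)] fun _ => K.u z := by
    filter_upwards [eventually_gt_nhds zero_lt_one] with s hs
    exact K.homog z hz s hs
  have hc0 : HasDerivAt (fun s : ℝ => K.u (s • z)) 0 1 :=
    (hasDerivAt_const (1 : ℝ) (K.u z)).congr_of_eventuallyEq heq
  rw [K.inner_grad]
  exact hc.unique hc0

lemma hess_apply_self (z : Euc n) (hz : z ≠ 0) :
    fderiv ℝ (gradient K.u) z z = - gradient K.u z := by
  have hγ : HasDerivAt (fun s : ℝ => s • z) z 1 := by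
    simpa using (hasDerivAt_id (1 : ℝ)).smul_const z
  have hg : HasFDerivAt (gradient K.u) (fderiv ℝ (gradient K.u) z) ((1 : ℝ) • z) := by
    rw [one_smul]; exact (K.diffGradientAt z hz).hasFDerivAt
  have hc : HasDerivAt (fun s : ℝ => gradient K.u (s • z))
      (fderiv ℝ (gradient K.u) z z) 1 :=
    HasFDerivAt.comp_hasDerivAt (l := gradient K.u) (f := fun s : ℝ => s • z) 1 hg hγ
  have heq : (fun s : ℝ => gradient K.u (s • z))
      =ᶠ[nhds (1 : ℝ)] fun s : ℝ => s⁻¹ • gradient K.u z := by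
    filter_upwards [eventually_gt_nhds zero_lt_one] with s hs
    exact K.grad_homog z hz s hs
  have hc2 : HasDerivAt (fun s : ℝ => s⁻¹ • gradient K.u z)
      ((-((1 : ℝ) ^ 2)⁻¹) • gradient K.u z) 1 :=
    (hasDerivAt_inv one_ne_zero).smul_const (gradient K.u z)
  have hc3 : HasDerivAt (fun s : ℝ => gradient K.u (s • z))
      ((-((1 : ℝ) ^ 2)⁻¹) • gradient K.u z) 1 := hc2.congr_of_eventuallyEq heq
  have := hc.unique hc3
  rw [this]
  simp

lemma hess_homog (z : Euc n) (hz : z ≠ 0) (t : ℝ) (ht : 0 < t) :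
    fderiv ℝ (gradient K.u) (t • z) = (t ^ 2)⁻¹ • fderiv ℝ (gradient K.u) z := by
  have htz : t • z ≠ 0 := smul_ne_zero (ne_of_gt ht) hz
  have hsc : HasFDerivAt (fun w : Euc n => t • w)
      (t • ContinuousLinearMap.id ℝ (Euc n)) z := by
    exact (hasFDerivAt_id z).const_smul t
  have h1 : HasFDerivAt (fun w : Euc n => gradient K.u (t • w))
      ((fderiv ℝ (gradient K.u) (t • z)).comp (t • ContinuousLinearMap.id ℝ (Euc n))) z :=
    HasFDerivAt.comp z (K.diffGradientAt _ htz).hasFDerivAt hsc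
  have heq : (fun w : Euc n => t⁻¹ • gradient K.u w)
      =ᶠ[nhds z] (fun w : Euc n => gradient K.u (t • w)) := by
    filter_upwards [eventually_ne_nhds hz] with w hw
    exact (K.grad_homog w hw t ht).symm
  have h2 : HasFDerivAt (fun w : Euc n => gradient K.u (t • w))
      (t⁻¹ • fderiv ℝ (gradient K.u) z) z := by
    have := ((K.diffGradientAt z hz).hasFDerivAt).const_smul t⁻¹
    exact (HasFDerivAt.congr_of_eventuallyEq this heq.symm : _)
  have h3 := h1.unique h2
  ext h
  have h4 := congrArg (fun L : Euc n →L[ℝ] Euc n => L (t⁻¹ • h)) h3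
  simp only [ContinuousLinearMap.coe_comp', Function.comp_apply,
    ContinuousLinearMap.smul_apply, ContinuousLinearMap.coe_id', id_eq,
    smul_inv_smul₀ (ne_of_gt ht)] at h4
  rw [h4]
  simp [smul_smul, pow_two, mul_inv]

end StarBody

set_option maxHeartbeats 2000000 in
/-- For a bounded star-shaped domain `K ⊆ ℝⁿ` with smooth boundary,
radial profile `u` and `v = ∇u/(1+u)`, the mean curvature of `∂K` at `T(x)`, `x ∈ S^{n-1}`,
can be written in divergence form as
`H_{T(x)} = (n−1+|v|²)/((1+u)√(1+|v|²)) − (1+u)^{−2} div(∇u/√(1+|v|²))`,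
where `div` and `∇` are the divergence and gradient on `S^{n-1}`. -/
theorem mean_curvature_divergence_formula (n : ℕ) (hn : 2 ≤ n) (K : StarBody n)
    (x : Euc n) (hx : x ∈ sphere (0 : Euc n) 1) :
    K.meanCurv (K.T x)
      = ((n : ℝ) - 1 + ‖K.v x‖ ^ 2) / ((1 + K.u x) * Real.sqrt (1 + ‖K.v x‖ ^ 2))
        - (1 + K.u x) ^ (-2 : ℤ)
          * divg (fun y => (Real.sqrt (1 + ‖K.v y‖ ^ 2))⁻¹ • gradient K.u y) x := by
  have hx1 : ‖x‖ = 1 := by simpa using hx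
  have hx0 : x ≠ 0 := by
    intro h; rw [h] at hx1; simp at hx1
  set a : ℝ := 1 + K.u x with ha_def
  have ha : 0 < a := by have := K.gtNegOne x; rw [ha_def]; linarith
  have ha0 : a ≠ 0 := ne_of_gt ha
  set vv : Euc n := K.v x with hvv_def
  have hvv : vv = a⁻¹ • gradient K.u x := rfl
  set m : ℝ := ‖vv‖ ^ 2 with hm_def
  have hm0 : 0 ≤ m := sq_nonneg _
  set L : ℝ := LinearMap.trace ℝ (Euc n) (fderiv ℝ (gradient K.u) x).toLinearMap with hL_def
  set P : ℝ := ⟪fderiv ℝ (gradient K.u) x vv, vv⟫ with hP_def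
  have h1m : (0:ℝ) < 1 + m := by linarith
  set s : ℝ := Real.sqrt (1 + m) with hs_def
  have hs0 : 0 < s := Real.sqrt_pos.mpr h1m
  have hs2 : s ^ 2 = 1 + m := Real.sq_sqrt (le_of_lt h1m)
  have hsne : s ≠ 0 := ne_of_gt hs0
  -- basic geometric facts
  have hgx_orth : ⟪gradient K.u x, x⟫ = 0 := K.grad_orth x hx0
  have hxx : ⟪x, x⟫ = (1:ℝ) := by
    rw [real_inner_self_eq_norm_sq, hx1]; norm_num
  have hvx_orth : ⟪x, vv⟫ = 0 := by
    rw [hvv, real_inner_smul_right, real_inner_comm, hgx_orth, mul_zero]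
  have hvvm : ⟪vv, vv⟫ = m := by rw [real_inner_self_eq_norm_sq]
  have hvx_orth' : ⟪vv, x⟫ = 0 := by rw [real_inner_comm]; exact hvx_orth
  have hgxv : gradient K.u x = a • vv := by rw [hvv, smul_inv_smul₀ ha0]
  have hy0 : a • x ≠ 0 := smul_ne_zero ha0 hx0
  have hna : ‖a • x‖ = a := by rw [norm_smul, hx1, mul_one, Real.norm_eq_abs, abs_of_pos ha]
  have hTx : K.T x = a • x := rfl
  have hAxx : fderiv ℝ (gradient K.u) x x = - gradient K.u x := K.hess_apply_self x hx0
  have hsymm : ∀ h k : Euc n, ⟪fderiv ℝ (gradient K.u) x h, k⟫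
      = ⟪fderiv ℝ (gradient K.u) x k, h⟫ := K.hess_symm_s8 x hx0
  -- value of the radial field at a • x
  have hGy0' : ‖a • x‖⁻¹ • (a • x) - gradient K.u (a • x) = x - vv := by
    rw [hna, K.grad_homog x hx0 a ha, smul_smul, inv_mul_cancel₀ ha0, one_smul, ← hvv]
  have hq2 : ‖x - vv‖ ^ 2 = 1 + m := by
    rw [← real_inner_self_eq_norm_sq]
    simp only [inner_sub_left, inner_sub_right, hxx, hvvm, hvx_orth, hvx_orth']
    ring
  have hqs : ‖x - vv‖ = s := by
    rw [hs_def, ← hq2, Real.sqrt_sq (norm_nonneg _)]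
  have hG0ne : x - vv ≠ 0 := by
    intro h
    rw [h, norm_zero] at hqs
    exact hsne hqs.symm
  -- identification of the normal field away from 0
  have hGgrad : ∀ z : Euc n, z ≠ 0 →
      gradient K.Fdef z = ‖z‖⁻¹ • z - gradient K.u z := by
    intro z hz
    have h2 : HasFDerivAt (fun w : Euc n => 1 + K.u w) (fderiv ℝ K.u z) z :=
      ((K.diffAt z hz).hasFDerivAt).const_add 1
    have hF : HasFDerivAt K.Fdef (‖z‖⁻¹ • innerSL ℝ z - fderiv ℝ K.u z) z :=
      (hasFDerivAt_norm_ne hz).sub h2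
    rw [gradient_eq_dual, hF.fderiv, map_sub, _root_.map_smul, dualToEuc_innerSL]
    rfl
  -- derivative of the radial unit field minus gradient at a • x
  have hrho : HasFDerivAt (fun z : Euc n => ‖z‖⁻¹)
      ((-(‖a • x‖ ^ 2)⁻¹) • (‖a • x‖⁻¹ • innerSL ℝ (a • x))) (a • x) := by
    have h1 : HasDerivAt (fun y : ℝ => y⁻¹) (-(‖a • x‖ ^ 2)⁻¹) ‖a • x‖ :=
      hasDerivAt_inv (by rw [hna]; exact ha0)
    exact h1.comp_hasFDerivAt _ (hasFDerivAt_norm_ne hy0)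
  have hrad : HasFDerivAt (fun z : Euc n => ‖z‖⁻¹ • z)
      (‖a • x‖⁻¹ • ContinuousLinearMap.id ℝ (Euc n)
        + ((-(‖a • x‖ ^ 2)⁻¹) • (‖a • x‖⁻¹ • innerSL ℝ (a • x))).smulRight (a • x)) (a • x) :=
    hrho.smul (hasFDerivAt_id _)
  have hgd : HasFDerivAt (gradient K.u)
      ((a ^ 2)⁻¹ • fderiv ℝ (gradient K.u) x) (a • x) := by
    rw [← K.hess_homog x hx0 a ha]
    exact (K.diffGradientAt _ hy0).hasFDerivAt
  have hGder : HasFDerivAt (fun z : Euc n => ‖z‖⁻¹ • z - gradient K.u z)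
      (‖a • x‖⁻¹ • ContinuousLinearMap.id ℝ (Euc n)
        + ((-(‖a • x‖ ^ 2)⁻¹) • (‖a • x‖⁻¹ • innerSL ℝ (a • x))).smulRight (a • x)
        - (a ^ 2)⁻¹ • fderiv ℝ (gradient K.u) x) (a • x) :=
    hrad.sub hgd
  set B : Euc n →L[ℝ] Euc n :=
      ‖a • x‖⁻¹ • ContinuousLinearMap.id ℝ (Euc n)
        + ((-(‖a • x‖ ^ 2)⁻¹) • (‖a • x‖⁻¹ • innerSL ℝ (a • x))).smulRight (a • x)
        - (a ^ 2)⁻¹ • fderiv ℝ (gradient K.u) x with hB_def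
  have hnormG : HasFDerivAt (fun z : Euc n => ‖‖z‖⁻¹ • z - gradient K.u z‖)
      ((‖x - vv‖⁻¹ • innerSL ℝ (x - vv)).comp B) (a • x) := by
    have h0' : HasFDerivAt (fun w : Euc n => ‖w‖) (‖x - vv‖⁻¹ • innerSL ℝ (x - vv))
        (‖a • x‖⁻¹ • (a • x) - gradient K.u (a • x)) := by
      rw [hGy0']
      exact hasFDerivAt_norm_ne hG0ne
    exact h0'.comp (a • x) hGder
  have hrhoG : HasFDerivAt (fun z : Euc n => ‖‖z‖⁻¹ • z - gradient K.u z‖⁻¹)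
      ((-(‖x - vv‖ ^ 2)⁻¹) • ((‖x - vv‖⁻¹ • innerSL ℝ (x - vv)).comp B)) (a • x) := by
    have hinv' : HasDerivAt (fun y : ℝ => y⁻¹) (-(‖x - vv‖ ^ 2)⁻¹)
        ‖‖a • x‖⁻¹ • (a • x) - gradient K.u (a • x)‖ := by
      rw [hGy0']
      exact hasDerivAt_inv (by rw [hqs]; exact hsne)
    exact hinv'.comp_hasFDerivAt (a • x) hnormG
  have hNder0 : HasFDerivAt
      (fun z : Euc n => ‖‖z‖⁻¹ • z - gradient K.u z‖⁻¹ • (‖z‖⁻¹ • z - gradient K.u z))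
      (‖‖a • x‖⁻¹ • (a • x) - gradient K.u (a • x)‖⁻¹ • B
        + ((-(‖x - vv‖ ^ 2)⁻¹) • ((‖x - vv‖⁻¹ • innerSL ℝ (x - vv)).comp B)).smulRight
            (‖a • x‖⁻¹ • (a • x) - gradient K.u (a • x))) (a • x) :=
    hrhoG.smul hGder
  rw [hGy0'] at hNder0
  have hNfd : fderiv ℝ K.normal (a • x)
      = ‖x - vv‖⁻¹ • B
        + ((-(‖x - vv‖ ^ 2)⁻¹) • ((‖x - vv‖⁻¹ • innerSL ℝ (x - vv)).comp B)).smulRight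
            (x - vv) := by
    have hev : K.normal =ᶠ[nhds (a • x)]
        (fun z : Euc n => ‖‖z‖⁻¹ • z - gradient K.u z‖⁻¹ • (‖z‖⁻¹ • z - gradient K.u z)) := by
      filter_upwards [eventually_ne_nhds hy0] with w hw
      unfold StarBody.normal
      rw [hGgrad w hw]
    rw [hev.fderiv_eq, hNder0.fderiv]
  -- trace of B
  have htraceB : LinearMap.trace ℝ (Euc n) B.toLinearMap
      = a⁻¹ * n - a⁻¹ - (a ^ 2)⁻¹ * L := by
    rw [hB_def]
    simp only [ContinuousLinearMap.coe_sub, ContinuousLinearMap.coe_add,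
      ContinuousLinearMap.coe_smul, map_sub, map_add, _root_.map_smul, trace_clm_id,
      trace_smulRight', smul_eq_mul]
    rw [← hL_def]
    simp only [ContinuousLinearMap.smul_apply, innerSL_apply_apply, smul_eq_mul, hna,
      real_inner_smul_left, real_inner_smul_right, hxx]
    field_simp
    ring
  -- value of B at x - vv, paired with x - vv
  have hinner1 : ⟪a • x, x - vv⟫ = a := by
    rw [real_inner_smul_left, inner_sub_right, hxx, hvx_orth]
    ring
  have hBapp : B (x - vv)
      = a⁻¹ • (x - vv) + (-(a ^ 2)⁻¹ * (a⁻¹ * a)) • (a • x)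
        - (a ^ 2)⁻¹ • fderiv ℝ (gradient K.u) x (x - vv) := by
    rw [hB_def]
    simp only [ContinuousLinearMap.sub_apply, ContinuousLinearMap.add_apply,
      ContinuousLinearMap.smul_apply, ContinuousLinearMap.smulRight_apply,
      ContinuousLinearMap.coe_id', id_eq, innerSL_apply_apply, smul_eq_mul, hna, hinner1]
  have hAx_sub : fderiv ℝ (gradient K.u) x (x - vv)
      = -(a • vv) - fderiv ℝ (gradient K.u) x vv := by
    rw [map_sub, hAxx, hgxv]
  have hinner_xAv : ⟪x, fderiv ℝ (gradient K.u) x vv⟫ = -(a * m) := by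
    rw [real_inner_comm, hsymm vv x, hAxx, hgxv, inner_neg_left, real_inner_smul_left, hvvm]
  have hvAv : ⟪vv, fderiv ℝ (gradient K.u) x vv⟫ = P := by
    rw [hP_def, real_inner_comm]
  have hinnerAx : ⟪x - vv, fderiv ℝ (gradient K.u) x (x - vv)⟫ = 2 * a * m + P := by
    rw [hAx_sub]
    simp only [inner_sub_left, inner_sub_right, inner_neg_right, real_inner_smul_right,
      hvx_orth, hvvm, hinner_xAv, hvAv]
    ring
  have e3 : ⟪x - vv, x⟫ = 1 := by
    rw [inner_sub_left, hxx, hvx_orth']; ring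
  have e4 : ⟪x - vv, vv⟫ = -m := by
    rw [inner_sub_left, hvx_orth, hvvm]; ring
  have hBinner : ⟪x - vv, B (x - vv)⟫
      = a⁻¹ * (1 + m) + -(a ^ 2)⁻¹ * (a⁻¹ * a) * (a * 1) - (a ^ 2)⁻¹ * (2 * a * m + P) := by
    rw [hBapp]
    simp only [inner_add_right, inner_sub_right, real_inner_smul_right, e3, e4, hinnerAx]
    ring
  -- the mean curvature
  have hLHS : K.meanCurv (K.T x)
      = ‖x - vv‖⁻¹ * (LinearMap.trace ℝ (Euc n) B.toLinearMap)
        + (-(‖x - vv‖ ^ 2)⁻¹ * (‖x - vv‖⁻¹ * ⟪x - vv, B (x - vv)⟫)) := by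
    unfold StarBody.meanCurv divg
    rw [hTx, hNfd, ContinuousLinearMap.coe_add, ContinuousLinearMap.coe_smul, map_add,
      _root_.map_smul, trace_smulRight', smul_eq_mul]
    simp only [ContinuousLinearMap.smul_apply, ContinuousLinearMap.coe_comp',
      Function.comp_apply, innerSL_apply_apply, smul_eq_mul]
  -- derivative of v and of the flux field at x
  have hsum : HasFDerivAt (fun z : Euc n => 1 + K.u z) (fderiv ℝ K.u x) x :=
    ((K.diffAt x hx0).hasFDerivAt).const_add 1
  have hci : HasFDerivAt (fun z : Euc n => (1 + K.u z)⁻¹)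
      ((-(a ^ 2)⁻¹) • fderiv ℝ K.u x) x := by
    have h1 : HasDerivAt (fun y : ℝ => y⁻¹) (-(a ^ 2)⁻¹) (1 + K.u x) := hasDerivAt_inv ha0
    exact h1.comp_hasFDerivAt x hsum
  set Dv : Euc n →L[ℝ] Euc n :=
      a⁻¹ • fderiv ℝ (gradient K.u) x
        + ((-(a ^ 2)⁻¹) • fderiv ℝ K.u x).smulRight (gradient K.u x) with hDv_def
  have hvd : HasFDerivAt K.v Dv x :=
    hci.smul (K.diffGradientAt x hx0).hasFDerivAt
  have hψ : HasFDerivAt (fun z : Euc n => 1 + ‖K.v z‖ ^ 2)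
      ((fderivInnerCLM ℝ (K.v x, K.v x)).comp (Dv.prod Dv)) x := by
    have h1 : HasFDerivAt (fun z : Euc n => ⟪K.v z, K.v z⟫)
        ((fderivInnerCLM ℝ (K.v x, K.v x)).comp (Dv.prod Dv)) x := hvd.inner ℝ hvd
    have h2 : (fun z : Euc n => 1 + ‖K.v z‖ ^ 2) = fun z : Euc n => 1 + ⟪K.v z, K.v z⟫ := by
      funext z; rw [real_inner_self_eq_norm_sq]
    rw [h2]
    exact h1.const_add 1
  have hsq : HasFDerivAt (fun z : Euc n => Real.sqrt (1 + ‖K.v z‖ ^ 2))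
      ((1 / (2 * s)) • ((fderivInnerCLM ℝ (K.v x, K.v x)).comp (Dv.prod Dv))) x :=
    hψ.sqrt (ne_of_gt h1m)
  have hsinv : HasFDerivAt (fun z : Euc n => (Real.sqrt (1 + ‖K.v z‖ ^ 2))⁻¹)
      ((-(s ^ 2)⁻¹) • ((1 / (2 * s)) • ((fderivInnerCLM ℝ (K.v x, K.v x)).comp (Dv.prod Dv)))) x := by
    have h1 : HasDerivAt (fun y : ℝ => y⁻¹) (-(s ^ 2)⁻¹) s := hasDerivAt_inv hsne
    exact h1.comp_hasFDerivAt x hsq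
  have hW : HasFDerivAt (fun y : Euc n => (Real.sqrt (1 + ‖K.v y‖ ^ 2))⁻¹ • gradient K.u y)
      (s⁻¹ • fderiv ℝ (gradient K.u) x
        + ((-(s ^ 2)⁻¹) • ((1 / (2 * s)) •
            ((fderivInnerCLM ℝ (K.v x, K.v x)).comp (Dv.prod Dv)))).smulRight
          (gradient K.u x)) x :=
    hsinv.smul (K.diffGradientAt x hx0).hasFDerivAt
  have hvDg : ⟪vv, Dv (gradient K.u x)⟫
      = a⁻¹ * (a * P) + (-(a ^ 2)⁻¹ * (a * (a * m))) * (a * m) := by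
    rw [hDv_def]
    simp only [ContinuousLinearMap.add_apply, ContinuousLinearMap.smul_apply,
      ContinuousLinearMap.smulRight_apply, smul_eq_mul]
    rw [← K.inner_grad x (gradient K.u x), hgxv]
    simp only [_root_.map_smul, inner_add_right, real_inner_smul_left, real_inner_smul_right,
      hvvm, hvAv, smul_eq_mul]
    try ring
  have hdivW : divg (fun y => (Real.sqrt (1 + ‖K.v y‖ ^ 2))⁻¹ • gradient K.u y) x
      = s⁻¹ * L + (-(s ^ 2)⁻¹ * ((1 / (2 * s)) *
          (⟪K.v x, Dv (gradient K.u x)⟫ + ⟪Dv (gradient K.u x), K.v x⟫))) := by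
    unfold divg
    rw [hW.fderiv, ContinuousLinearMap.coe_add, ContinuousLinearMap.coe_smul, map_add,
      _root_.map_smul, trace_smulRight', smul_eq_mul, ← hL_def]
    simp only [ContinuousLinearMap.smul_apply, ContinuousLinearMap.coe_comp',
      Function.comp_apply, fderivInnerCLM_apply, ContinuousLinearMap.prod_apply, smul_eq_mul]
  have hcomm : ⟪Dv (gradient K.u x), K.v x⟫ = ⟪vv, Dv (gradient K.u x)⟫ := by
    rw [real_inner_comm, hvv_def]
  clear_value a vv m L P s B Dv
  rw [hLHS, htraceB, hBinner, hqs, hdivW, hcomm, ← hvv_def, hvDg]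
  have hzp : a ^ (-2 : ℤ) = (a ^ 2)⁻¹ := by
    rw [zpow_neg, zpow_two, sq]
  rw [hzp]
  have hm' : m = s ^ 2 - 1 := by rw [hs2]; ring
  rw [hm']
  field_simp
  ring
end
end
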